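/- Consider an ALG-schedule and a reference time t ≥ 0. Let j ∈ Cl(t) and let k be a job with r k ≤ t and k ∉ N(t), and suppose (j,k) is an E_N-edge of the borrow graph. Then y_k(s_k) ≤ y_j(s_j). -/

import Mathlib

open MeasureTheory Set

open scoped Classical

noncomputable section

variable {J : Type*}

/-- Total work done on job `j` by time `u` under the schedule `σ`. -/
def workDone (σ : ℝ → J → ℝ) (j : J) (u : ℝ) : ℝ := ∫ v in (0:ℝ)..u, σ v j

/-- Remaining processing time of job `j` at time `u`. -/
def remT (p : J → ℝ) (σ : ℝ → J → ℝ) (j : J) (u : ℝ) : ℝ := p j - workDone σ j u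

/-- Completion time of job `j`: the least `u` with `workDone σ j u = p j`,
    and `⊤` if the job never completes. -/
def cTime (p : J → ℝ) (σ : ℝ → J → ℝ) (j : J) : EReal :=
  sInf ((fun v : ℝ => (v : EReal)) '' {v : ℝ | workDone σ j v = p j})

/-- Job `j` is available at time `u`: released and not yet completed. -/
def availAt (r p : J → ℝ) (σ : ℝ → J → ℝ) (u : ℝ) (j : J) : Prop :=
  r j ≤ u ∧ (u : EReal) < cTime p σ j

/-- Job `j` is processed at time `u`. -/
def procAt (σ : ℝ → J → ℝ) (u : ℝ) (j : J) : Prop := 0 < σ u j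

/-- Job `j` is non-clairvoyant at time `u`. -/
def ncAt (r p : J → ℝ) (α : ℝ) (σ : ℝ → J → ℝ) (u : ℝ) (j : J) : Prop :=
  availAt r p σ u j ∧ workDone σ j u ≤ α * p j

/-- Job `j` is clairvoyant at time `u`. -/
def clAt (r p : J → ℝ) (α : ℝ) (σ : ℝ → J → ℝ) (u : ℝ) (j : J) : Prop :=
  availAt r p σ u j ∧ α * p j < workDone σ j u

/-- The time at which job `j` emits its signal: the least `u` with
    `workDone σ j u = α * p j`. -/
def emitT (p : J → ℝ) (α : ℝ) (σ : ℝ → J → ℝ) (j : J) : ℝ :=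
  sInf {u : ℝ | workDone σ j u = α * p j}

/-- Data of an instance: nonnegative release dates, positive processing times
    and `α ∈ (0,1)`. -/
structure IsInstance (r p : J → ℝ) (α : ℝ) : Prop where
  r_nonneg : ∀ j, 0 ≤ r j
  p_pos : ∀ j, 0 < p j
  alpha_mem : α ∈ Set.Ioo (0 : ℝ) 1

/-- `σ` is a (feasible, preemptive, single machine) schedule. -/
structure IsSchedule [Fintype J] (r p : J → ℝ) (σ : ℝ → J → ℝ) : Prop where
  meas : ∀ j, Measurable fun u => σ u j
  nonneg : ∀ u j, 0 ≤ σ u j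
  sum_le_one : ∀ u, ∑ j, σ u j ≤ 1
  zero_before_release : ∀ u j, u < r j → σ u j = 0
  workDone_le : ∀ u j, workDone σ j u ≤ p j

/-- A schedule is non-idling if it uses the full machine capacity whenever
    some job is available. -/
def NonIdling [Fintype J] (r p : J → ℝ) (σ : ℝ → J → ℝ) : Prop :=
  ∀ u, (∃ j, availAt r p σ u j) → ∑ j, σ u j = 1

/-- The SRPT condition at time `u`: `Cl(u) ≠ ∅` and
    `min_{j ∈ Cl(u)} p_j(u) ≤ ((1-α)/α) · min_{j ∈ N(u)} y_j(u)`
    (the minimum over the empty set being `+∞`). -/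
def SrptCond (r p : J → ℝ) (α : ℝ) (σ : ℝ → J → ℝ) (u : ℝ) : Prop :=
  ∃ k, clAt r p α σ u k ∧
    ∀ j, ncAt r p α σ u j → remT p σ k u ≤ ((1 - α) / α) * workDone σ j u

/-- `k` is a clairvoyant job of minimal remaining processing time at `u`,
    emitting last among those. -/
def IsSrptChoice (r p : J → ℝ) (α : ℝ) (σ : ℝ → J → ℝ) (u : ℝ) (k : J) : Prop :=
  clAt r p α σ u k ∧
    (∀ j, clAt r p α σ u j → remT p σ k u ≤ remT p σ j u) ∧
    (∀ j, clAt r p α σ u j → remT p σ j u = remT p σ k u →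
      emitT p α σ j ≤ emitT p α σ k)

/-- `j` is a non-clairvoyant job with minimal progress at time `u`. -/
def IsMinNc (r p : J → ℝ) (α : ℝ) (σ : ℝ → J → ℝ) (u : ℝ) (j : J) : Prop :=
  ncAt r p α σ u j ∧ ∀ j', ncAt r p α σ u j' → workDone σ j u ≤ workDone σ j' u

/-- `σ` is an ALG-schedule: non-idling, and at any time with available jobs it
    either runs a single clairvoyant job of shortest remaining processing time
    (breaking ties by latest emission) when the SRPT condition holds, or it runs
    exactly the non-clairvoyant jobs of minimal progress at equal rates. -/
structure IsALG [Fintype J] (r p : J → ℝ) (α : ℝ) (σ : ℝ → J → ℝ) : Prop where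
  sched : IsSchedule r p σ
  nonidling : NonIdling r p σ
  srpt_branch : ∀ u, (∃ j, availAt r p σ u j) → SrptCond r p α σ u →
    ∃ k, IsSrptChoice r p α σ u k ∧ ∀ j, j ≠ k → σ u j = 0
  setf_branch : ∀ u, (∃ j, availAt r p σ u j) → ¬ SrptCond r p α σ u →
    (∀ j, procAt σ u j → IsMinNc r p α σ u j) ∧
    (∀ j j', IsMinNc r p α σ u j → IsMinNc r p α σ u j' → σ u j = σ u j')

/-- Right endpoint `min (C_j, t)` of the lifetime of `j` w.r.t. reference time `t`. -/
def lifeEnd (p : J → ℝ) (σ : ℝ → J → ℝ) (t : ℝ) (j : J) : ℝ :=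
  (min (cTime p σ j) (t : EReal)).toReal

/-- The lifetime `I_j = [r j, min (C_j, t)]` of job `j`. -/
def lifetime (r p : J → ℝ) (σ : ℝ → J → ℝ) (t : ℝ) (j : J) : Set ℝ :=
  Set.Icc (r j) (lifeEnd p σ t j)

/-- `E_N`-edge of the borrow graph: `i` is processed at some time of `I_j`
    while being non-clairvoyant. -/
def ENedge (r p : J → ℝ) (α : ℝ) (σ : ℝ → J → ℝ) (t : ℝ) (j i : J) : Prop :=
  ∃ u ∈ lifetime r p σ t j, procAt σ u i ∧ ncAt r p α σ u i

/-- `E_C`-edge of the borrow graph: `i` is processed at some time of `I_j`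
    while being clairvoyant. -/
def ECedge (r p : J → ℝ) (α : ℝ) (σ : ℝ → J → ℝ) (t : ℝ) (j i : J) : Prop :=
  ∃ u ∈ lifetime r p σ t j, procAt σ u i ∧ clAt r p α σ u i

/-- Edge of the borrow graph `G_B`. -/
def borrowEdge (r p : J → ℝ) (α : ℝ) (σ : ℝ → J → ℝ) (t : ℝ) (j i : J) : Prop :=
  ENedge r p α σ t j i ∨ ECedge r p α σ t j i

/-- `reaches j i` iff `i ∈ R_j`, i.e. `i` is reachable from `j` in the borrow
    graph (`j` itself included). -/
def reaches (r p : J → ℝ) (α : ℝ) (σ : ℝ → J → ℝ) (t : ℝ) : J → J → Prop :=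
  Relation.ReflTransGen (borrowEdge r p α σ t)

/-- Truncated progress `ȳ_j = min (y_j(t), α p_j)`. -/
def truncY (p : J → ℝ) (α : ℝ) (σ : ℝ → J → ℝ) (t : ℝ) (j : J) : ℝ :=
  min (workDone σ j t) (α * p j)

end

/-!
Both signal levels are reached by time `t`, so the claim reads `α p_k ≤ α p_j`.
Whenever `k` runs while non-clairvoyant at a time `v` at which `j` is alive, ALG is not in
its SRPT branch. Hence `k` has least progress among non-clairvoyant jobs, so either `j` is
non-clairvoyant and `y_k(v) ≤ y_j(v) ≤ α p_j`, or `j` is clairvoyant and loses the SRPT test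
to a non-clairvoyant `i`, which forces `y_k(v) ≤ y_i(v) < α p_j`. From the time `u` of the
`E_N`-edge on, the progress of `k` grows only at such times, so it is still at most `α p_j`
when `k` emits its signal.
-/

open intervalIntegral in
theorem primitive_le_of_le_where_pos {g : ℝ → ℝ}
    (hg : ∀ a b, IntervalIntegrable g volume a b) {a b c : ℝ} (hab : a ≤ b)
    (ha : ∫ x in (0:ℝ)..a, g x ≤ c)
    (hpos : ∀ v ∈ Icc a b, 0 < g v → ∫ x in (0:ℝ)..v, g x ≤ c) :
    ∫ x in (0:ℝ)..b, g x ≤ c := by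
  set Y : ℝ → ℝ := fun v => ∫ x in (0:ℝ)..v, g x
  -- `w` is the last time in `[a, b]` at which `Y ≤ c`; `g` must be positive somewhere after it.
  set S := {v ∈ Icc a b | Y v ≤ c}
  have hS : IsClosed S :=
    isClosed_Icc.inter (isClosed_le (continuous_primitive hg 0) continuous_const)
  have hwS : sSup S ∈ S := hS.csSup_mem ⟨a, ⟨le_rfl, hab⟩, ha⟩ ⟨b, fun v hv => hv.1.2⟩
  set w := sSup S
  by_contra! hb
  have hwb : w < b := lt_of_le_of_ne hwS.1.2 fun h => hb.not_ge (h ▸ hwS.2)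
  have hint_pos : 0 < ∫ x in w..b, g x := by
    rw [← integral_interval_sub_left (hg 0 b) (hg 0 w)]
    exact sub_pos.2 (hwS.2.trans_lt hb)
  obtain ⟨v, hv, hgv⟩ : ∃ v ∈ Ioc w b, 0 < g v := by
    by_contra! h
    rw [integral_of_le hwb.le] at hint_pos
    exact hint_pos.not_ge (setIntegral_nonpos measurableSet_Ioc h)
  have hvab : v ∈ Icc a b := ⟨hwS.1.1.trans hv.1.le, hv.2⟩
  have hvS : v ∈ S := ⟨hvab, hpos v hvab hgv⟩
  exact hv.1.not_ge (le_csSup ⟨b, fun u hu => hu.1.2⟩ hvS)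

theorem Monotone.apply_sInf_setOf_eq {y : ℝ → ℝ} (hm : Monotone y) (hy : Continuous y)
    {a c T : ℝ} (ha : y a < c) (hT : c ≤ y T) :
    y (sInf {u | y u = c}) = c ∧ sInf {u | y u = c} ≤ T := by
  have haT : a ≤ T := hm.reflect_lt (ha.trans_le hT) |>.le
  obtain ⟨u, huT, hu⟩ := intermediate_value_Icc haT hy.continuousOn ⟨ha.le, hT⟩
  have hbdd : BddBelow {u | y u = c} :=
    ⟨a, fun v hv => (hm.reflect_lt (ha.trans_eq hv.symm)).le⟩
  exact ⟨(isClosed_eq hy continuous_const).csInf_mem ⟨u, hu⟩ hbdd,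
    (csInf_le hbdd hu).trans huT.2⟩

namespace IsSchedule

variable {J : Type*} [Fintype J] {r p : J → ℝ} {α : ℝ} {σ : ℝ → J → ℝ} {j k : J}

theorem intervalIntegrable (hs : IsSchedule r p σ) (j : J) (a b : ℝ) :
    IntervalIntegrable (fun v => σ v j) volume a b := by
  have hle : ∀ v, σ v j ≤ 1 := fun v =>
    (Finset.single_le_sum (fun i _ => hs.nonneg v i) (Finset.mem_univ j)).trans
      (hs.sum_le_one v)
  refine intervalIntegrable_const (c := (1 : ℝ)) |>.mono_fun
    (hs.meas j).aestronglyMeasurable.restrict (Filter.Eventually.of_forall fun v => ?_)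
  simpa [abs_of_nonneg (hs.nonneg v j)] using hle v

theorem continuous_workDone (hs : IsSchedule r p σ) (j : J) : Continuous (workDone σ j) :=
  intervalIntegral.continuous_primitive (hs.intervalIntegrable j) 0

theorem monotone_workDone (hs : IsSchedule r p σ) (j : J) : Monotone (workDone σ j) := by
  intro a b hab
  have := intervalIntegral.integral_interval_sub_left (hs.intervalIntegrable j 0 b)
    (hs.intervalIntegrable j 0 a)
  have := intervalIntegral.integral_nonneg (μ := volume) hab fun v _ => hs.nonneg v j
  unfold workDone
  linarith

theorem coe_lt_cTime (hs : IsSchedule r p σ) {k : J} {v : ℝ} (h : workDone σ k v < p k) :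
    (v : EReal) < cTime p σ k := by
  set S := {u | workDone σ k u = p k}
  rcases S.eq_empty_or_nonempty with hS | hS
  · simp [cTime, S, hS]
  have hvS : ∀ u ∈ S, v < u := fun u hu =>
    (hs.monotone_workDone k).reflect_lt (h.trans_eq hu.symm)
  have hbdd : BddBelow S := ⟨v, fun u hu => (hvS u hu).le⟩
  have hmem : sInf S ∈ S :=
    (isClosed_eq (hs.continuous_workDone k) continuous_const).csInf_mem hS hbdd
  calc (v : EReal) < (sInf S : ℝ) := EReal.coe_lt_coe_iff.2 (hvS _ hmem)
    _ ≤ cTime p σ k := le_sInf <| by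
      rintro _ ⟨u, hu, rfl⟩
      exact EReal.coe_le_coe_iff.2 (csInf_le hbdd hu)

theorem ncAt_of_procAt (hs : IsSchedule r p σ) (hα : α < 1) (hp : 0 < p k) {v : ℝ}
    (hk : procAt σ v k) (hy : workDone σ k v ≤ α * p k) : ncAt r p α σ v k := by
  refine ⟨⟨?_, hs.coe_lt_cTime (hy.trans_lt ?_)⟩, hy⟩
  · by_contra! hv
    exact hk.ne' (hs.zero_before_release v k hv)
  · nlinarith

theorem le_workDone_of_not_ncAt (hs : IsSchedule r p σ) (hα : α < 1) (hp : 0 < p k) {t : ℝ}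
    (hr : r k ≤ t) (hk : ¬ ncAt r p α σ t k) : α * p k ≤ workDone σ k t := by
  by_contra! h
  exact hk ⟨⟨hr, hs.coe_lt_cTime (h.trans (by nlinarith))⟩, h.le⟩

theorem workDone_emitT (hs : IsSchedule r p σ) (hc : 0 < α * p j) {T : ℝ}
    (hT : α * p j ≤ workDone σ j T) :
    workDone σ j (emitT p α σ j) = α * p j ∧ emitT p α σ j ≤ T :=
  (hs.monotone_workDone j).apply_sInf_setOf_eq (hs.continuous_workDone j) (a := 0)
    (by simpa [workDone] using hc) hT

end IsSchedule

theorem lifeEnd_eq_of_lt {J : Type*} {p : J → ℝ} {σ : ℝ → J → ℝ} {t : ℝ} {j : J}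
    (h : (t : EReal) < cTime p σ j) : lifeEnd p σ t j = t := by
  rw [lifeEnd, min_eq_right h.le, EReal.toReal_coe]

namespace IsALG

variable {J : Type*} [Fintype J] {r p : J → ℝ} {α : ℝ} {σ : ℝ → J → ℝ}

theorem not_srptCond_and_isMinNc_of_procAt (halg : IsALG r p α σ) {v : ℝ} {k : J} (hk : procAt σ v k)
    (hnc : ncAt r p α σ v k) : ¬ SrptCond r p α σ v ∧ IsMinNc r p α σ v k := by
  have hA : ∃ i, availAt r p σ v i := ⟨k, hnc.1⟩
  by_cases hS : SrptCond r p α σ v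
  · obtain ⟨k', hk', hzero⟩ := halg.srpt_branch v hA hS
    obtain rfl : k = k' := by_contra fun h => hk.ne' (hzero k h)
    exact absurd hnc.2 hk'.1.2.not_ge
  · exact ⟨hS, (halg.setf_branch v hA hS).1 k hk⟩

theorem workDone_le_of_procAt (halg : IsALG r p α σ) (hα : α ∈ Ioo 0 1) {v : ℝ} {j k : J}
    (hk : procAt σ v k) (hnc : ncAt r p α σ v k) (hj : availAt r p σ v j) :
    workDone σ k v ≤ α * p j := by
  obtain ⟨hS, -, hmin⟩ := halg.not_srptCond_and_isMinNc_of_procAt hk hnc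
  by_cases hjnc : workDone σ j v ≤ α * p j
  · exact (hmin j ⟨hj, hjnc⟩).trans hjnc
  -- `j` is clairvoyant, yet SRPT is not run: some non-clairvoyant `i` has
  -- `((1-α)/α) y_i < p_j(v) < (1-α) p_j`, and `y_k ≤ y_i`.
  simp only [SrptCond, not_exists, not_and, not_forall, not_le] at hS
  obtain ⟨i, hinc, hi⟩ := hS j ⟨hj, not_le.1 hjnc⟩
  have hki := hmin i hinc
  obtain ⟨hα0, hα1⟩ := hα
  have hlt : (1 - α) / α * workDone σ k v < (1 - α) * p j := by
    have := mul_le_mul_of_nonneg_left hki (div_nonneg (sub_nonneg.2 hα1.le) hα0.le)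
    rw [remT] at hi
    linarith
  rw [div_mul_eq_mul_div, div_lt_iff₀ hα0, mul_assoc, mul_comm (p j)] at hlt
  exact (lt_of_mul_lt_mul_left hlt (sub_nonneg.2 hα1.le)).le

end IsALG

theorem stmt14_general {J : Type*} [Fintype J] {r p : J → ℝ} {α : ℝ} {σ : ℝ → J → ℝ}
    (hinst : IsInstance r p α) (halg : IsALG r p α σ) (t : ℝ)
    (j k : J) (hj : clAt r p α σ t j) (hk₁ : r k ≤ t) (hk₂ : ¬ ncAt r p α σ t k)
    (he : ENedge r p α σ t j k) :
    workDone σ k (emitT p α σ k) ≤ workDone σ j (emitT p α σ j) := by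
  have hs := halg.sched
  obtain ⟨hα0, hα1⟩ := hinst.alpha_mem
  obtain ⟨hyk, hskt⟩ := hs.workDone_emitT (mul_pos hα0 (hinst.p_pos k))
    (hs.le_workDone_of_not_ncAt hα1 (hinst.p_pos k) hk₁ hk₂)
  obtain ⟨hyj, -⟩ := hs.workDone_emitT (mul_pos hα0 (hinst.p_pos j)) hj.2.le
  obtain ⟨u, ⟨hju, hut⟩, hku, hknc⟩ := he
  rw [lifeEnd_eq_of_lt hj.1.2] at hut
  have hj_avail : ∀ v, u ≤ v → v ≤ t → availAt r p σ v j := fun v huv hvt =>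
    ⟨hju.trans huv, (EReal.coe_le_coe_iff.2 hvt).trans_lt hj.1.2⟩
  have hu := halg.workDone_le_of_procAt hinst.alpha_mem hku hknc (hj_avail u le_rfl hut)
  rw [hyj]
  rcases le_total u (emitT p α σ k) with hus | hsu
  · refine primitive_le_of_le_where_pos (hs.intervalIntegrable k) hus hu ?_
    rintro v ⟨huv, hvs⟩ hkv
    have hknc_v := hs.ncAt_of_procAt hα1 (hinst.p_pos k) hkv
      (hyk ▸ hs.monotone_workDone k hvs)
    exact halg.workDone_le_of_procAt hinst.alpha_mem hkv hknc_v (hj_avail v huv (hvs.trans hskt))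
  · exact (hs.monotone_workDone k hsu).trans hu

/-- If `j ∈ Cl(t)`, `k` is a job with `r k ≤ t` and
`k ∉ N(t)`, and `(j,k)` is an `E_N`-edge of the borrow graph, then
`y_k(s_k) ≤ y_j(s_j)`. -/
theorem stmt14 {J : Type*} [Fintype J] {r p : J → ℝ} {α : ℝ} {σ : ℝ → J → ℝ}
    (hinst : IsInstance r p α) (halg : IsALG r p α σ) (t : ℝ) (ht : 0 ≤ t)
    (j k : J) (hj : clAt r p α σ t j) (hk₁ : r k ≤ t) (hk₂ : ¬ ncAt r p α σ t k)
    (he : ENedge r p α σ t j k) :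
    workDone σ k (emitT p α σ k) ≤ workDone σ j (emitT p α σ j) :=
  stmt14_general hinst halg t j k hj hk₁ hk₂ he
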